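/- arXiv:2305.02771 — 4 statements merged into one kernel-verified Lean document; each statement's English description precedes it below -/
import Mathlib

section
/- Let (E, D) be a hemicompact metric space and let α > 1. Let (d_n)_{n∈ℕ} be distances on E such that α⁻¹·D(x,y) ≤ d_n(x,y) ≤ α·D(x,y) for all x, y ∈ E and all n ∈ ℕ. Then there exist a subsequence (n_i)_{i∈ℕ} and a distance d on E satisfying α⁻¹·D ≤ d ≤ α·D such that d_{n_i} → d uniformly on every compact subset of E × E. -/
open Filter MeasureTheory Set
open scoped ENNReal Topology

/-- Length of the curve `γ` on the interval `[a, b]`, with respect to the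
(candidate) distance `d`, defined as a supremum over finite partitions. -/
noncomputable def pathLengthOn {E : Type*} (d : E → E → ℝ) (γ : ℝ → E) (a b : ℝ) : ℝ≥0∞ :=
  ⨆ (k : ℕ) (t : Fin (k + 1) → ℝ) (_ : Monotone t) (_ : t 0 = a) (_ : t (Fin.last k) = b),
    ∑ i : Fin k, ENNReal.ofReal (d (γ (t i.succ)) (γ (t i.castSucc)))

/-- Length of the curve `γ : [0,1] → E` with respect to `d`. -/
noncomputable def pathLength {E : Type*} (d : E → E → ℝ) (γ : ℝ → E) : ℝ≥0∞ :=
  pathLengthOn d γ 0 1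

/-- `d` is a distance on `E`. -/
def IsDistance {E : Type*} (d : E → E → ℝ) : Prop :=
  (∀ x y, d x y = d y x) ∧ (∀ x y z, d x z ≤ d x y + d y z) ∧ ∀ x y, d x y = 0 ↔ x = y

/-- `γ : [0,1] → E` is a Lipschitz curve with respect to `d`. -/
def LipCurve {E : Type*} (d : E → E → ℝ) (γ : ℝ → E) : Prop :=
  ∃ K : ℝ, ∀ s ∈ Icc (0 : ℝ) 1, ∀ t ∈ Icc (0 : ℝ) 1, d (γ s) (γ t) ≤ K * |s - t|

/-- `(E, d)` is a length space: `d x y` is the infimum of lengths of Lipschitz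
curves `γ : [0,1] → E` joining `x` to `y`. -/
def IsLengthDist {E : Type*} (d : E → E → ℝ) : Prop :=
  ∀ x y : E, ENNReal.ofReal (d x y) =
    ⨅ (γ : ℝ → E) (_ : LipCurve d γ) (_ : γ 0 = x) (_ : γ 1 = y), pathLength d γ

/-- `d ∈ 𝒟_α(Ω)` : `d` is a distance on `Ω` making it a length space and satisfying
`α⁻¹ D ≤ d ≤ α D`. -/
def MemD {X : Type*} [MetricSpace X] (α : ℝ) (Ω : Set X) (d : Ω → Ω → ℝ) : Prop :=
  IsDistance d ∧ IsLengthDist d ∧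
    ∀ x y : Ω, α⁻¹ * dist (x : X) (y : X) ≤ d x y ∧ d x y ≤ α * dist (x : X) (y : X)

/-- Uniform convergence `dn → d` on compact subsets of `E × E`. -/
def TendstoUnifCompactly {E : Type*} [TopologicalSpace E]
    (dn : ℕ → E → E → ℝ) (d : E → E → ℝ) : Prop :=
  ∀ K : Set (E × E), IsCompact K → ∀ ε : ℝ, 0 < ε →
    ∃ N : ℕ, ∀ n ≥ N, ∀ p ∈ K, |dn n p.1 p.2 - d p.1 p.2| < ε

/-- `e` is a continuous extension of `d : Ω → Ω → ℝ` to the closure of `Ω`. -/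
def IsContExt {X : Type*} [MetricSpace X] (Ω : Set X) (d : Ω → Ω → ℝ)
    (e : closure Ω → closure Ω → ℝ) : Prop :=
  Continuous (fun p : closure Ω × closure Ω => e p.1 p.2) ∧
    ∀ x y : Ω, e ⟨x, subset_closure x.2⟩ ⟨y, subset_closure y.2⟩ = d x y

/-- `(E, d)` is a geodesic space: any two points are joined by a constant-speed curve
`γ : [0,1] → E` whose length on each subinterval `[t,s]` equals `d (γ t) (γ s)`. -/
def IsGeodesicDist {E : Type*} (d : E → E → ℝ) : Prop :=
  ∀ x y : E, ∃ γ : ℝ → E, γ 0 = x ∧ γ 1 = y ∧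
    (∀ t s : ℝ, 0 ≤ t → t ≤ s → s ≤ 1 →
      pathLengthOn d γ t s = pathLength d γ * ENNReal.ofReal (s - t)) ∧
    ∀ t s : ℝ, 0 ≤ t → t ≤ s → s ≤ 1 →
      pathLengthOn d γ t s = ENNReal.ofReal (d (γ t) (γ s))

/-- Uniform convergence on `[0,1]` of a sequence of curves. -/
def UnifConvCurves {E : Type*} [MetricSpace E] (γn : ℕ → ℝ → E) (γ : ℝ → E) : Prop :=
  ∀ ε : ℝ, 0 < ε → ∃ N : ℕ, ∀ n ≥ N, ∀ t ∈ Icc (0 : ℝ) 1, dist (γn n t) (γ t) < ε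

/-- Γ-convergence of the length functionals `L_{dn}` to `L_d` on the space of
Lipschitz curves `[0,1] → E` with the topology of uniform convergence. -/
def GammaConvLengths {E : Type*} [MetricSpace E] (dn : ℕ → E → E → ℝ) (d : E → E → ℝ) : Prop :=
  (∀ (γn : ℕ → ℝ → E) (γ : ℝ → E),
      (∀ n, LipCurve (fun x y : E => dist x y) (γn n)) →
      LipCurve (fun x y : E => dist x y) γ → UnifConvCurves γn γ →
      pathLength d γ ≤ liminf (fun n => pathLength (dn n) (γn n)) atTop) ∧
  ∀ γ : ℝ → E, LipCurve (fun x y : E => dist x y) γ →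
    ∃ γn : ℕ → ℝ → E, (∀ n, LipCurve (fun x y : E => dist x y) (γn n)) ∧
      UnifConvCurves γn γ ∧
      limsup (fun n => pathLength (dn n) (γn n)) atTop ≤ pathLength d γ

/-- Arzelà–Ascoli-type compactness for equi-comparable distances on a
hemicompact metric space. -/
theorem stmt1 {E : Type*} [MetricSpace E]
    (hhemi : ∃ K : ℕ → Set E, (∀ n, IsCompact (K n)) ∧
      ∀ S : Set E, IsCompact S → ∃ n : ℕ, S ⊆ K n)
    (α : ℝ) (hα : 1 < α)
    (dn : ℕ → E → E → ℝ) (hdn : ∀ n, IsDistance (dn n))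
    (hbd : ∀ n, ∀ x y : E, α⁻¹ * dist x y ≤ dn n x y ∧ dn n x y ≤ α * dist x y) :
    ∃ φ : ℕ → ℕ, StrictMono φ ∧ ∃ d : E → E → ℝ, IsDistance d ∧
      (∀ x y : E, α⁻¹ * dist x y ≤ d x y ∧ d x y ≤ α * dist x y) ∧
      TendstoUnifCompactly (fun i => dn (φ i)) d := by
  have hα0 : (0:ℝ) < α := lt_trans one_pos hα
  have hαinv : (0:ℝ) < α⁻¹ := inv_pos.2 hα0
  -- nonnegativity of the dn
  have hnn : ∀ n x y, 0 ≤ dn n x y := fun n x y =>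
    le_trans (mul_nonneg hαinv.le dist_nonneg) (hbd n x y).1
  -- equi-Lipschitz estimate
  have hlip : ∀ n (x y x' y' : E),
      |dn n x y - dn n x' y'| ≤ α * (dist x x' + dist y y') := by
    intro n x y x' y'
    have key : ∀ a b a' b' : E, dn n a b - dn n a' b' ≤ α * (dist a a' + dist b b') := by
      intro a b a' b'
      have t1 : dn n a b ≤ dn n a a' + dn n a' b := (hdn n).2.1 a a' b
      have t2 : dn n a' b ≤ dn n a' b' + dn n b' b := (hdn n).2.1 a' b' b
      have s1 : dn n a a' ≤ α * dist a a' := (hbd n a a').2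
      have s2 : dn n b' b ≤ α * dist b' b := (hbd n b' b).2
      have : dn n a b ≤ dn n a' b' + α * dist a a' + α * dist b' b := by linarith
      have hd : dist b' b = dist b b' := dist_comm _ _
      rw [hd] at this
      linarith [mul_add α (dist a a') (dist b b')]
    rw [abs_sub_le_iff]
    constructor
    · exact key x y x' y'
    · have := key x' y' x y
      rw [dist_comm x' x, dist_comm y' y] at this
      exact this
  rcases isEmpty_or_nonempty E with hE | hE
  · refine ⟨id, strictMono_id, fun _ _ => 0, ⟨?_, ?_, ?_⟩, ?_, ?_⟩
    · exact fun x => (IsEmpty.false x).elim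
    · exact fun x => (IsEmpty.false x).elim
    · exact fun x => (IsEmpty.false x).elim
    · exact fun x => (IsEmpty.false x).elim
    · intro K _ ε hε
      exact ⟨0, fun n _ p _ => ((IsEmpty.false p.1).elim)⟩
  -- separability
  have hsep : TopologicalSpace.SeparableSpace E := by
    obtain ⟨K, hKc, hKa⟩ := hhemi
    have huniv : (Set.univ : Set E) = ⋃ n, K n := by
      apply Set.eq_of_subset_of_subset
      · intro x _
        obtain ⟨n, hn⟩ := hKa {x} isCompact_singleton
        exact Set.mem_iUnion.2 ⟨n, hn rfl⟩
      · exact Set.subset_univ _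
    have : TopologicalSpace.IsSeparable (Set.univ : Set E) := by
      rw [huniv]
      exact TopologicalSpace.IsSeparable.iUnion fun n => (hKc n).isSeparable
    exact TopologicalSpace.isSeparable_univ_iff.1 this
  obtain ⟨u, hu⟩ := TopologicalSpace.exists_dense_seq E
  have hu' : ∀ (x : E) (r : ℝ), 0 < r → ∃ k, dist x (u k) < r :=
    Metric.denseRange_iff.1 hu
  -- compact product space and diagonal subsequence
  set X := ∀ kl : ℕ × ℕ, Set.Icc (0:ℝ) (α * dist (u kl.1) (u kl.2)) with hX
  have : CompactSpace X := by infer_instance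
  set F : ℕ → X := fun n kl =>
    ⟨dn n (u kl.1) (u kl.2), hnn n _ _, (hbd n _ _).2⟩ with hF
  obtain ⟨L, φ, hφ, hLφ⟩ := CompactSpace.tendsto_subseq F
  have hpt : ∀ k l : ℕ, Tendsto (fun i => dn (φ i) (u k) (u l)) atTop (𝓝 (L (k, l) : ℝ)) := by
    intro k l
    have h1 : Tendsto (fun i => (F (φ i)) (k, l)) atTop (𝓝 (L (k, l))) :=
      (continuous_apply (k, l)).continuousAt.tendsto.comp hLφ
    exact (continuous_subtype_val.tendsto _).comp h1
  -- Cauchy at every pair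
  have hcauchy : ∀ x y : E, CauchySeq (fun i => dn (φ i) x y) := by
    intro x y
    rw [Metric.cauchySeq_iff]
    intro ε hε
    have hδ : (0:ℝ) < ε / (8 * α) := by positivity
    obtain ⟨k, hk⟩ := hu' x _ hδ
    obtain ⟨l, hl⟩ := hu' y _ hδ
    have hc : CauchySeq (fun i => dn (φ i) (u k) (u l)) := (hpt k l).cauchySeq
    rw [Metric.cauchySeq_iff] at hc
    obtain ⟨N, hN⟩ := hc (ε/2) (by linarith)
    refine ⟨N, fun m hm n hn => ?_⟩
    have h1 := hlip (φ m) x y (u k) (u l)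
    have h2 := hlip (φ n) (u k) (u l) x y
    have h3 := hN m hm n hn
    rw [Real.dist_eq] at h3 ⊢
    have hb : α * (dist x (u k) + dist y (u l)) < α * (ε/(8*α) + ε/(8*α)) := by
      apply mul_lt_mul_of_pos_left (by linarith) hα0
    have hb2 : α * (ε/(8*α) + ε/(8*α)) = ε/4 := by field_simp; ring
    have h2' : |dn (φ n) (u k) (u l) - dn (φ n) x y|
        ≤ α * (dist (u k) x + dist (u l) y) := h2
    rw [dist_comm (u k) x, dist_comm (u l) y] at h2'
    calc |dn (φ m) x y - dn (φ n) x y|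
        ≤ |dn (φ m) x y - dn (φ m) (u k) (u l)|
          + |dn (φ m) (u k) (u l) - dn (φ n) (u k) (u l)|
          + |dn (φ n) (u k) (u l) - dn (φ n) x y| := by
            have := abs_sub_le (dn (φ m) x y) (dn (φ m) (u k) (u l)) (dn (φ n) x y)
            have := abs_sub_le (dn (φ m) (u k) (u l)) (dn (φ n) (u k) (u l)) (dn (φ n) x y)
            linarith [abs_sub_le (dn (φ m) x y) (dn (φ m) (u k) (u l)) (dn (φ n) (u k) (u l)),
              abs_sub_le (dn (φ m) (u k) (u l)) (dn (φ n) (u k) (u l)) (dn (φ n) x y)]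
      _ < ε := by
            have e1 : |dn (φ m) x y - dn (φ m) (u k) (u l)| < ε/4 := lt_of_le_of_lt h1 (by linarith [hb, hb2])
            have e2 : |dn (φ n) (u k) (u l) - dn (φ n) x y| < ε/4 := lt_of_le_of_lt h2' (by linarith [hb, hb2])
            linarith
  -- define the limit distance
  set d : E → E → ℝ := fun x y => limUnder atTop (fun i => dn (φ i) x y) with hdDef
  have hd : ∀ x y, Tendsto (fun i => dn (φ i) x y) atTop (𝓝 (d x y)) := fun x y =>
    (hcauchy x y).tendsto_limUnder
  -- bounds on d
  have hdbd : ∀ x y : E, α⁻¹ * dist x y ≤ d x y ∧ d x y ≤ α * dist x y := by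
    intro x y
    constructor
    · exact ge_of_tendsto' (hd x y) fun i => (hbd (φ i) x y).1
    · exact le_of_tendsto' (hd x y) fun i => (hbd (φ i) x y).2
  -- Lipschitz estimate for d
  have hdlip : ∀ x y x' y' : E, |d x y - d x' y'| ≤ α * (dist x x' + dist y y') := by
    intro x y x' y'
    have ht : Tendsto (fun i => |dn (φ i) x y - dn (φ i) x' y'|) atTop
        (𝓝 (|d x y - d x' y'|)) := ((hd x y).sub (hd x' y')).abs
    exact le_of_tendsto' ht fun i => hlip (φ i) x y x' y'
  refine ⟨φ, hφ, d, ⟨?_, ?_, ?_⟩, hdbd, ?_⟩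
  · intro x y
    have h1 := hd x y
    have h2 : Tendsto (fun i => dn (φ i) x y) atTop (𝓝 (d y x)) := by
      have := hd y x
      convert this using 2 with i
      exact (hdn (φ i)).1 x y
    exact tendsto_nhds_unique h1 h2
  · intro x y z
    exact le_of_tendsto_of_tendsto' (hd x z) ((hd x y).add (hd y z))
      fun i => (hdn (φ i)).2.1 x y z
  · intro x y
    constructor
    · intro h
      have hle := (hdbd x y).1
      rw [h] at hle
      have : dist x y ≤ 0 := by
        by_contra hc
        push_neg at hc
        have := mul_pos hαinv hc
        linarith
      exact dist_le_zero.1 this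
    · rintro rfl
      have h1 : Tendsto (fun i => dn (φ i) x x) atTop (𝓝 0) := by
        have : (fun i => dn (φ i) x x) = fun _ => (0:ℝ) := by
          funext i
          exact ((hdn (φ i)).2.2 x x).2 rfl
        rw [this]; exact tendsto_const_nhds
      exact tendsto_nhds_unique (hd x x) h1
  -- uniform convergence on compacts
  · intro K hK ε hε
    have hδ : (0:ℝ) < ε / (16 * α) := by positivity
    set δ := ε / (16 * α) with hδdef
    have hcover : K ⊆ ⋃ q ∈ K, Metric.ball q δ := fun p hp =>
      Set.mem_biUnion hp (Metric.mem_ball_self hδ)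
    obtain ⟨t, htK, htfin, htcov⟩ := hK.elim_finite_subcover_image
      (fun q _ => Metric.isOpen_ball) hcover
    have hptconv : ∀ q ∈ t, ∀ᶠ n in atTop, |dn (φ n) (Prod.fst q) (Prod.snd q) - d q.1 q.2| < ε/2 := by
      intro q _
      obtain ⟨N, hN⟩ := Metric.tendsto_atTop.1 (hd q.1 q.2) (ε/2) (by linarith)
      exact eventually_atTop.2 ⟨N, fun n hn => by have := hN n hn; rwa [Real.dist_eq] at this⟩
    have hall : ∀ᶠ n in atTop, ∀ q ∈ t, |dn (φ n) q.1 q.2 - d q.1 q.2| < ε/2 :=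
      htfin.eventually_all.2 hptconv
    obtain ⟨N, hN⟩ := eventually_atTop.1 hall
    refine ⟨N, fun n hn p hp => ?_⟩
    obtain ⟨q, hqt, hpq⟩ := Set.mem_iUnion₂.1 (htcov hp)
    have hdist : dist p q < δ := Metric.mem_ball.1 hpq
    have h1 : dist p.1 q.1 < δ := lt_of_le_of_lt (le_trans (le_max_left _ _) (le_of_eq (Prod.dist_eq).symm)) hdist
    have h2 : dist p.2 q.2 < δ := lt_of_le_of_lt (le_trans (le_max_right _ _) (le_of_eq (Prod.dist_eq).symm)) hdist
    have e1 : |dn (φ n) p.1 p.2 - dn (φ n) q.1 q.2| ≤ α * (dist p.1 q.1 + dist p.2 q.2) :=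
      hlip (φ n) p.1 p.2 q.1 q.2
    have e2 : |dn (φ n) q.1 q.2 - d q.1 q.2| < ε/2 := hN n hn q hqt
    have e3 : |d q.1 q.2 - d p.1 p.2| ≤ α * (dist q.1 p.1 + dist q.2 p.2) :=
      hdlip q.1 q.2 p.1 p.2
    rw [dist_comm q.1 p.1, dist_comm q.2 p.2] at e3
    have hb : α * (dist p.1 q.1 + dist p.2 q.2) < α * (2 * δ) :=
      mul_lt_mul_of_pos_left (by linarith) hα0
    have hb2 : α * (2 * δ) = ε/8 := by rw [hδdef]; field_simp; ring
    calc |dn (φ n) p.1 p.2 - d p.1 p.2|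
        ≤ |dn (φ n) p.1 p.2 - dn (φ n) q.1 q.2| + |dn (φ n) q.1 q.2 - d q.1 q.2|
          + |d q.1 q.2 - d p.1 p.2| := by
            linarith [abs_sub_le (dn (φ n) p.1 p.2) (dn (φ n) q.1 q.2) (d q.1 q.2),
              abs_sub_le (dn (φ n) p.1 p.2) (d q.1 q.2) (d p.1 p.2)]
      _ < ε := by linarith
end

section
/- Let (X, D) be a locally compact, complete metric space, let Ω ⊆ X be an open set, let α > 1, and let d ∈ D_α(Ω). Then the metric space (Ω̄, d̄) is a geodesic space, where d̄ is the unique continuous extension of d to Ω̄ × Ω̄. -/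
open Filter MeasureTheory Set
open scoped ENNReal Topology

/-!
By density and continuity, `e` is a metric on `closure Ω` that is bi-Lipschitz equivalent to
`dist`, so `(closure Ω, e)` is complete and locally compact. Cutting a near-optimal curve for `d`
at the right parameter gives approximate intermediate points: for `θ ∈ [0, 1]` and `ε > 0` there
is `z` with `e x z ≤ θ e x y + ε` and `e z y ≤ (1 - θ) e x y + ε`, and these pass to the closure.
In a complete, locally compact space with approximate intermediate points all closed balls are
compact (Hopf–Rinow–Cohn-Vossen), so approximate midpoints accumulate at exact midpoints.
Iterating midpoints along dyadic parameters and passing to the limit by completeness yields a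
curve with `e (γ t) (γ s) = (s - t) e x y`, which is a geodesic.
-/

open Metric

theorem Fin.sum_univ_succ_sub_castSucc {M : Type*} [AddCommGroup M] {k : ℕ}
    (f : Fin (k + 1) → M) : ∑ i : Fin k, (f i.succ - f i.castSucc) = f (Fin.last k) - f 0 := by
  induction k with
  | zero => simp
  | succ k ih =>
    rw [Fin.sum_univ_castSucc]
    simp only [Fin.succ_castSucc]
    rw [ih fun i => f i.castSucc]
    simp

theorem Nat.two_mul_floor_le_floor_two_mul {u : ℝ} (hu : 0 ≤ u) : 2 * ⌊u⌋₊ ≤ ⌊2 * u⌋₊ :=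
  Nat.le_floor (by push_cast; linarith [Nat.floor_le hu])

theorem Nat.floor_two_mul_le_two_mul_floor_add_one {u : ℝ} (hu : 0 ≤ u) :
    ⌊2 * u⌋₊ ≤ 2 * ⌊u⌋₊ + 1 :=
  Nat.lt_add_one_iff.1 <| (Nat.floor_lt (by positivity)).2 <| by
    push_cast; linarith [Nat.lt_floor_add_one u]

theorem Nat.floor_mul_two_pow_le {t : ℝ} (ht : t ≤ 1) (n : ℕ) : ⌊t * 2 ^ n⌋₊ ≤ 2 ^ n :=
  Nat.floor_le_of_le (by push_cast; exact mul_le_of_le_one_left (by positivity) ht)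

section PathLength

variable {E : Type*} (d : E → E → ℝ) (γ : ℝ → E)

theorem sum_le_pathLengthOn {a b : ℝ} {k : ℕ} (t : Fin (k + 1) → ℝ) (ht : Monotone t)
    (h0 : t 0 = a) (hk : t (Fin.last k) = b) :
    ∑ i : Fin k, ENNReal.ofReal (d (γ (t i.succ)) (γ (t i.castSucc))) ≤ pathLengthOn d γ a b :=
  le_iSup_of_le k <| le_iSup_of_le t <| le_iSup_of_le ht <| le_iSup_of_le h0 <|
    le_iSup_of_le hk le_rfl

theorem ofReal_le_pathLengthOn {a b : ℝ} (hab : a ≤ b) :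
    ENNReal.ofReal (d (γ b) (γ a)) ≤ pathLengthOn d γ a b := by
  simpa using sum_le_pathLengthOn d γ ![a, b]
    (Fin.monotone_iff_le_succ.2 fun i => by fin_cases i; simpa using hab) rfl rfl

theorem sum_range_le_pathLength {N : ℕ} (hN : 0 < N) :
    ∑ i ∈ Finset.range N, ENNReal.ofReal (d (γ ((i + 1) / N)) (γ (i / N))) ≤ pathLength d γ := by
  have hN' : (0 : ℝ) < N := Nat.cast_pos.2 hN
  rw [← Fin.sum_univ_eq_sum_range (fun i => ENNReal.ofReal (d (γ ((i + 1) / N)) (γ (i / N))))]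
  refine le_of_eq_of_le ?_ (sum_le_pathLengthOn d γ (fun i : Fin (N + 1) => (i : ℝ) / N)
    (fun i j hij => by simp only; gcongr; exact_mod_cast hij) (by simp) (by simp [hN'.ne']))
  simp

theorem pathLengthOn_eq_of_dist_eq {a b c : ℝ} (hab : a ≤ b) (hc : 0 ≤ c)
    (hγ : ∀ u v, a ≤ u → u ≤ v → v ≤ b → d (γ v) (γ u) = c * (v - u)) :
    pathLengthOn d γ a b = ENNReal.ofReal (c * (b - a)) := by
  refine le_antisymm (iSup_le fun k => iSup_le fun t => iSup_le fun ht => iSup_le fun h0 =>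
    iSup_le fun hk => ?_) (by simpa [hγ a b le_rfl hab le_rfl] using ofReal_le_pathLengthOn d γ hab)
  have hmem : ∀ i, t i ∈ Icc a b := fun i => ⟨h0 ▸ ht (Fin.zero_le i), hk ▸ ht (Fin.le_last i)⟩
  have hstep : ∀ i : Fin k, t i.castSucc ≤ t i.succ := fun i => ht (Fin.castSucc_le_succ i)
  apply le_of_eq
  calc ∑ i : Fin k, ENNReal.ofReal (d (γ (t i.succ)) (γ (t i.castSucc)))
      = ∑ i : Fin k, ENNReal.ofReal (c * (t i.succ - t i.castSucc)) :=
        Finset.sum_congr rfl fun i _ => by rw [hγ _ _ (hmem _).1 (hstep i) (hmem _).2]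
    _ = ENNReal.ofReal (c * ∑ i : Fin k, (t i.succ - t i.castSucc)) := by
        rw [Finset.mul_sum, ENNReal.ofReal_sum_of_nonneg fun i _ =>
          mul_nonneg hc (sub_nonneg.2 (hstep i))]
    _ = ENNReal.ofReal (c * (b - a)) := by
        rw [Fin.sum_univ_succ_sub_castSucc, hk, h0]

end PathLength

theorem isGeodesicDist_of_exists_dist_eq {E : Type*} {d : E → E → ℝ} (hsymm : ∀ x y, d x y = d y x)
    (hnonneg : ∀ x y, 0 ≤ d x y)
    (h : ∀ x y, ∃ γ : ℝ → E, γ 0 = x ∧ γ 1 = y ∧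
      ∀ t s, 0 ≤ t → t ≤ s → s ≤ 1 → d (γ t) (γ s) = (s - t) * d x y) :
    IsGeodesicDist d := by
  intro x y
  obtain ⟨γ, h0, h1, hγ⟩ := h x y
  have hlen : ∀ t s, 0 ≤ t → t ≤ s → s ≤ 1 →
      pathLengthOn d γ t s = ENNReal.ofReal (d x y * (s - t)) := fun t s ht hts hs =>
    pathLengthOn_eq_of_dist_eq d γ hts (hnonneg x y) fun u v hu huv hv => by
      rw [hsymm, hγ u v (ht.trans hu) huv (hv.trans hs), mul_comm]
  have hL : pathLength d γ = ENNReal.ofReal (d x y) := by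
    simpa [pathLength] using hlen 0 1 le_rfl zero_le_one le_rfl
  refine ⟨γ, h0, h1, fun t s ht hts hs => ?_, fun t s ht hts hs => ?_⟩
  · rw [hlen t s ht hts hs, hL, ENNReal.ofReal_mul (hnonneg x y)]
  · rw [hlen t s ht hts hs, hγ t s ht hts hs, mul_comm]

def HasApproxIntermediatePoints {E : Type*} (d : E → E → ℝ) : Prop :=
  ∀ x y : E, ∀ θ ∈ Icc (0 : ℝ) 1, ∀ ε > 0,
    ∃ z, d x z ≤ θ * d x y + ε ∧ d z y ≤ (1 - θ) * d x y + ε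

namespace IsDistance

variable {E : Type*} {d : E → E → ℝ}

theorem nonneg (hd : IsDistance d) (x y : E) : 0 ≤ d x y := by
  have := hd.2.1 x y x
  rw [(hd.2.2 x x).2 rfl, hd.1 y x] at this
  linarith

theorem le_sum_Ico (hd : IsDistance d) (p : ℕ → E) {m n : ℕ} (hmn : m ≤ n) :
    d (p m) (p n) ≤ ∑ i ∈ Finset.Ico m n, d (p i) (p (i + 1)) := by
  induction n, hmn using Nat.le_induction with
  | base => simp [(hd.2.2 _ _).2 rfl]
  | succ n hmn ih =>
    rw [Finset.sum_Ico_succ_top hmn]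
    linarith [hd.2.1 (p m) (p n) (p (n + 1))]

/-- The chain is cut at the last index whose partial sum is at most `θ` times the total. -/
theorem exists_intermediate_of_chain (hd : IsDistance d) (p : ℕ → E) (N : ℕ) {θ η : ℝ}
    (hθ : θ ∈ Icc (0 : ℝ) 1) (hη : 0 ≤ η) (hstep : ∀ i < N, d (p i) (p (i + 1)) ≤ η) :
    ∃ j, d (p 0) (p j) ≤ θ * ∑ i ∈ Finset.range N, d (p i) (p (i + 1)) ∧
      d (p j) (p N) ≤ (1 - θ) * ∑ i ∈ Finset.range N, d (p i) (p (i + 1)) + η := by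
  classical
  obtain ⟨s, hs⟩ : ∃ s : ℕ → ℝ, ∀ j, s j = ∑ i ∈ Finset.range j, d (p i) (p (i + 1)) :=
    ⟨_, fun _ => rfl⟩
  simp only [← hs]
  have hsN : 0 ≤ s N := hs N ▸ Finset.sum_nonneg fun i _ => hd.nonneg _ _
  set j := Nat.findGreatest (fun k => s k ≤ θ * s N) N
  have hjN : j ≤ N := Nat.findGreatest_le N
  have hj : s j ≤ θ * s N := Nat.findGreatest_spec (P := fun k => s k ≤ θ * s N)
    (Nat.zero_le N) (by simpa [hs] using mul_nonneg hθ.1 hsN)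
  have hxj : d (p 0) (p j) ≤ s j := by
    rw [hs, Finset.range_eq_Ico]
    exact hd.le_sum_Ico p (Nat.zero_le j)
  have hjy : d (p j) (p N) ≤ s N - s j := by
    simpa [hs, Finset.sum_Ico_eq_sub _ hjN] using hd.le_sum_Ico p hjN
  refine ⟨j, hxj.trans hj, ?_⟩
  rcases hjN.lt_or_eq with hjN | hjN
  · have hnext : ¬ s (j + 1) ≤ θ * s N := Nat.findGreatest_is_greatest (Nat.lt_succ_self j) hjN
    rw [hs, Finset.sum_range_succ, ← hs] at hnext
    linarith [hstep j hjN]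
  · rw [hjN] at hjy ⊢
    nlinarith [hθ.2]

end IsDistance

theorem IsLengthDist.exists_lipCurve_pathLength_lt {E : Type*} {d : E → E → ℝ}
    (hl : IsLengthDist d) {x y : E} (hxy : 0 ≤ d x y) {ε : ℝ} (hε : 0 < ε) :
    ∃ γ, LipCurve d γ ∧ γ 0 = x ∧ γ 1 = y ∧ pathLength d γ < ENNReal.ofReal (d x y + ε) := by
  have : ⨅ (γ : ℝ → E) (_ : LipCurve d γ) (_ : γ 0 = x) (_ : γ 1 = y), pathLength d γ <
      ENNReal.ofReal (d x y + ε) := by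
    rw [← hl x y]
    exact (ENNReal.ofReal_lt_ofReal_iff_of_nonneg hxy).2 (by linarith)
  simpa only [iInf_lt_iff, exists_prop] using this

theorem IsLengthDist.hasApproxIntermediatePoints {E : Type*} {d : E → E → ℝ} (hd : IsDistance d)
    (hl : IsLengthDist d) : HasApproxIntermediatePoints d := by
  intro x y θ hθ ε hε
  obtain ⟨γ, ⟨K, hK⟩, h0, h1, hγ⟩ :=
    hl.exists_lipCurve_pathLength_lt (hd.nonneg x y) (half_pos hε)
  obtain ⟨N, hN⟩ := exists_nat_gt (max (2 * K / ε) 0)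
  have hN0 : (0 : ℝ) < N := (le_max_right _ _).trans_lt hN
  have hKN : 2 * K < N * ε := (div_lt_iff₀ hε).1 ((le_max_left _ _).trans_lt hN)
  set p : ℕ → E := fun i => γ (i / N)
  have hstep : ∀ i < N, d (p i) (p (i + 1)) ≤ ε / 2 := fun i hi => by
    have hmem : ∀ j ≤ N, (j : ℝ) / N ∈ Icc (0 : ℝ) 1 := fun j hj =>
      ⟨by positivity, div_le_one_of_le₀ (by exact_mod_cast hj) hN0.le⟩
    refine (hK _ (hmem i hi.le) _ (hmem (i + 1) hi)).trans ?_
    rw [Nat.cast_add_one, ← sub_div, show (i : ℝ) - (i + 1) = -1 by ring, abs_div, abs_neg,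
      abs_one, abs_of_pos hN0, mul_one_div, div_le_iff₀ hN0]
    linarith
  have hsum : ∑ i ∈ Finset.range N, d (p i) (p (i + 1)) < d x y + ε / 2 := by
    have := (sum_range_le_pathLength d γ (Nat.cast_pos.1 hN0)).trans_lt hγ
    rw [← ENNReal.ofReal_sum_of_nonneg fun i _ => hd.nonneg _ _,
      ENNReal.ofReal_lt_ofReal_iff_of_nonneg (Finset.sum_nonneg fun i _ => hd.nonneg _ _)] at this
    refine (Finset.sum_congr rfl fun i _ => ?_).trans_lt this
    simp only [p, Nat.cast_add_one]
    exact hd.1 _ _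
  obtain ⟨j, hxj, hjy⟩ := hd.exists_intermediate_of_chain p N hθ (half_pos hε).le hstep
  have hp0 : p 0 = x := by simp [p, h0]
  have hpN : p N = y := by simp [p, hN0.ne', h1]
  rw [hp0] at hxj
  rw [hpN] at hjy
  refine ⟨p j, ?_, ?_⟩
  · nlinarith [mul_le_mul_of_nonneg_left hsum.le hθ.1, hθ.2]
  · nlinarith [mul_le_mul_of_nonneg_left hsum.le (sub_nonneg.2 hθ.2), hθ.1]

section PseudoMetricSpace

variable {F : Type*} [PseudoMetricSpace F]

theorem HasApproxIntermediatePoints.of_denseRange {E : Type*} {i : E → F} (hi : DenseRange i)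
    (h : HasApproxIntermediatePoints fun a b => dist (i a) (i b)) :
    HasApproxIntermediatePoints (dist : F → F → ℝ) := by
  intro x y θ hθ ε hε
  obtain ⟨a, ha⟩ := hi.exists_dist_lt x (by positivity : 0 < ε / 4)
  obtain ⟨b, hb⟩ := hi.exists_dist_lt y (by positivity : 0 < ε / 4)
  obtain ⟨c, hac, hcb⟩ := h a b θ hθ (ε / 4) (by positivity)
  have hab : dist (i a) (i b) ≤ dist x y + ε / 2 := by
    linarith [dist_triangle4 (i a) x y (i b), dist_comm x (i a)]
  refine ⟨i c, ?_, ?_⟩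
  · nlinarith [dist_triangle x (i a) (i c), mul_le_mul_of_nonneg_left hab hθ.1, hθ.2]
  · nlinarith [dist_triangle (i c) (i b) y, dist_comm y (i b),
      mul_le_mul_of_nonneg_left hab (sub_nonneg.2 hθ.2), hθ.1]

namespace HasApproxIntermediatePoints

theorem exists_dist_le_of_dist_le (h : HasApproxIntermediatePoints (dist : F → F → ℝ))
    {x y : F} {r δ : ℝ} (hδ : 0 < δ) (hδr : δ ≤ r) (hxy : dist x y ≤ r + δ) :
    ∃ z, dist x z ≤ r ∧ dist z y ≤ 3 * δ := by
  rcases le_or_gt (dist x y) r with hle | hlt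
  · exact ⟨y, hle, by simp only [dist_self]; positivity⟩
  have hD : 0 < dist x y := by linarith
  obtain ⟨z, hxz, hzy⟩ := h x y ((r - δ) / dist x y)
    ⟨div_nonneg (by linarith) hD.le, div_le_one_of_le₀ (by linarith) hD.le⟩ δ hδ
  rw [div_mul_cancel₀ _ hD.ne'] at hxz
  rw [sub_mul, one_mul, div_mul_cancel₀ _ hD.ne'] at hzy
  exact ⟨z, by linarith, by linarith⟩

theorem isCompact_closedBall_of_forall_lt [CompleteSpace F]
    (h : HasApproxIntermediatePoints (dist : F → F → ℝ)) (x : F) {R : ℝ} (hR : 0 < R)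
    (hlt : ∀ r < R, IsCompact (closedBall x r)) : IsCompact (closedBall x R) := by
  refine TotallyBounded.isCompact_of_isClosed (totallyBounded_iff.2 fun ε hε => ?_)
    isClosed_closedBall
  set δ := min (R / 2) (ε / 6)
  have hδ : 0 < δ := lt_min (half_pos hR) (by positivity)
  have hδR : δ ≤ R / 2 := min_le_left _ _
  have hδε : δ ≤ ε / 6 := min_le_right _ _
  obtain ⟨t, ht, hcover⟩ :=
    totallyBounded_iff.1 (hlt (R - δ) (by linarith)).totallyBounded (ε / 2) (half_pos hε)
  refine ⟨t, ht, fun y hy => ?_⟩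
  obtain ⟨z, hxz, hzy⟩ := h.exists_dist_le_of_dist_le hδ (by linarith)
    (show dist x y ≤ R - δ + δ by simpa using mem_closedBall'.1 hy)
  obtain ⟨w, hw, hzw⟩ := mem_iUnion₂.1 (hcover (mem_closedBall'.2 hxz))
  refine mem_iUnion₂.2 ⟨w, hw, mem_ball.2 ?_⟩
  linarith [dist_triangle y z w, dist_comm y z, mem_ball.1 hzw]

theorem exists_pos_isCompact_closedBall_add [LocallyCompactSpace F]
    (h : HasApproxIntermediatePoints (dist : F → F → ℝ)) {x : F} {R : ℝ} (hR : 0 < R)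
    (hK : IsCompact (closedBall x R)) : ∃ δ > 0, IsCompact (closedBall x (R + δ)) := by
  obtain ⟨δ, hδ, hcomp⟩ := hK.exists_isCompact_cthickening
  refine ⟨min R (δ / 3), lt_min hR (by positivity),
    hcomp.of_isClosed_subset isClosed_closedBall fun y hy => ?_⟩
  obtain ⟨z, hxz, hzy⟩ := h.exists_dist_le_of_dist_le (lt_min hR (by positivity))
    (min_le_left _ _) (mem_closedBall'.1 hy)
  exact mem_cthickening_of_dist_le y z δ _ (mem_closedBall'.2 hxz)
    (by rw [dist_comm]; linarith [min_le_right R (δ / 3)])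

/-- Hopf–Rinow–Cohn-Vossen: the radii of compact balls about `x` form an interval, which contains
its supremum by completeness and is open at it by local compactness. -/
theorem properSpace [LocallyCompactSpace F] [CompleteSpace F]
    (h : HasApproxIntermediatePoints (dist : F → F → ℝ)) : ProperSpace F := by
  refine ⟨fun x => ?_⟩
  by_contra! hnot
  obtain ⟨r₀, hr₀⟩ := hnot
  set A := {r : ℝ | IsCompact (closedBall x r)}
  have hdown : ∀ r ∈ A, ∀ s ≤ r, s ∈ A := fun r hr s hs =>
    hr.of_isClosed_subset isClosed_closedBall (closedBall_subset_closedBall hs)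
  have hbdd : BddAbove A := ⟨r₀, fun r hr => not_lt.1 fun hlt => hr₀ (hdown r hr r₀ hlt.le)⟩
  obtain ⟨ρ, hρ, hρA⟩ : ∃ ρ > 0, ρ ∈ A := by
    obtain ⟨ρ, hρ, hc⟩ := (isCompact_singleton (x := x)).exists_isCompact_cthickening
    exact ⟨ρ, hρ, by rwa [cthickening_singleton x hρ.le] at hc⟩
  have hR : 0 < sSup A := hρ.trans_le (le_csSup hbdd hρA)
  have hRA : sSup A ∈ A := h.isCompact_closedBall_of_forall_lt x hR fun r hr => by
    obtain ⟨s, hs, hrs⟩ := exists_lt_of_lt_csSup ⟨ρ, hρA⟩ hr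
    exact hdown s hs r hrs.le
  obtain ⟨δ, hδ, hδA⟩ := h.exists_pos_isCompact_closedBall_add hR hRA
  linarith [le_csSup hbdd hδA]

theorem exists_midpoint [ProperSpace F] (h : HasApproxIntermediatePoints (dist : F → F → ℝ))
    (x y : F) : ∃ m, dist x m = dist x y / 2 ∧ dist m y = dist x y / 2 := by
  set f : F → ℝ := fun z => max (dist x z) (dist z y)
  obtain ⟨m, -, hm⟩ := (isCompact_closedBall x (dist x y / 2 + 1)).exists_isMinOn
    (nonempty_closedBall.2 (by positivity)) (by fun_prop : Continuous f).continuousOn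
  have hfm : f m ≤ dist x y / 2 := le_of_forall_pos_le_add fun ε hε => by
    have hε₁ : min ε 1 ≤ ε := min_le_left ε 1
    obtain ⟨z, hxz, hzy⟩ :=
      h x y (1 / 2) ⟨by norm_num, by norm_num⟩ (min ε 1) (lt_min hε one_pos)
    have hz : z ∈ closedBall x (dist x y / 2 + 1) :=
      mem_closedBall'.2 (by linarith [min_le_right ε 1])
    calc f m ≤ f z := isMinOn_iff.1 hm z hz
      _ ≤ dist x y / 2 + ε := max_le (by linarith) (by linarith)
  have hxm : dist x m ≤ dist x y / 2 := (le_max_left _ _).trans hfm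
  have hmy : dist m y ≤ dist x y / 2 := (le_max_right _ _).trans hfm
  exact ⟨m, by linarith [dist_triangle x m y], by linarith [dist_triangle x m y]⟩

end HasApproxIntermediatePoints

end PseudoMetricSpace

section Dyadic

variable {F : Type*}

/-- `dyadicPoint mid x y n k` is the point with parameter `k / 2 ^ n` on the curve from `x` to `y`
obtained by iterating `mid`. -/
def dyadicPoint (mid : F → F → F) (x y : F) : ℕ → ℕ → F
  | 0, k => if k = 0 then x else y
  | n + 1, k =>
    if k % 2 = 0 then dyadicPoint mid x y n (k / 2)
    else mid (dyadicPoint mid x y n (k / 2)) (dyadicPoint mid x y n (k / 2 + 1))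

variable (mid : F → F → F) (x y : F)

theorem dyadicPoint_succ (n k : ℕ) :
    dyadicPoint mid x y (n + 1) k = if k % 2 = 0 then dyadicPoint mid x y n (k / 2)
      else mid (dyadicPoint mid x y n (k / 2)) (dyadicPoint mid x y n (k / 2 + 1)) := by
  rw [dyadicPoint]

theorem dyadicPoint_succ_two_mul (n k : ℕ) :
    dyadicPoint mid x y (n + 1) (2 * k) = dyadicPoint mid x y n k := by
  simp [dyadicPoint_succ]

theorem dyadicPoint_apply_zero (n : ℕ) : dyadicPoint mid x y n 0 = x := by
  induction n with
  | zero => simp [dyadicPoint]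
  | succ n ih => simpa using dyadicPoint_succ_two_mul mid x y n 0 ▸ ih

theorem dyadicPoint_apply_two_pow (n : ℕ) : dyadicPoint mid x y n (2 ^ n) = y := by
  induction n with
  | zero => simp [dyadicPoint]
  | succ n ih => rw [pow_succ', dyadicPoint_succ_two_mul, ih]

variable [PseudoMetricSpace F] {mid x y}

theorem dist_dyadicPoint_succ
    (hmid : ∀ a b, dist a (mid a b) = dist a b / 2 ∧ dist (mid a b) b = dist a b / 2)
    (n k : ℕ) (hk : k + 1 ≤ 2 ^ n) :
    dist (dyadicPoint mid x y n k) (dyadicPoint mid x y n (k + 1)) = dist x y / 2 ^ n := by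
  induction n generalizing k with
  | zero =>
    obtain rfl : k = 0 := by simpa using hk
    simp [dyadicPoint]
  | succ n ih =>
    rw [pow_succ]
    rcases Nat.even_or_odd' k with ⟨j, rfl | rfl⟩
    · have hj : j + 1 ≤ 2 ^ n := by rw [pow_succ] at hk; omega
      rw [dyadicPoint_succ_two_mul, dyadicPoint_succ, if_neg (by omega),
        show (2 * j + 1) / 2 = j by omega, (hmid _ _).1, ih j hj, div_div]
    · have hj : j + 1 ≤ 2 ^ n := by rw [pow_succ] at hk; omega
      rw [show 2 * j + 1 + 1 = 2 * (j + 1) by ring, dyadicPoint_succ_two_mul, dyadicPoint_succ,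
        if_neg (by omega), show (2 * j + 1) / 2 = j by omega, (hmid _ _).2, ih j hj, div_div]

theorem dist_dyadicPoint_le
    (hmid : ∀ a b, dist a (mid a b) = dist a b / 2 ∧ dist (mid a b) b = dist a b / 2)
    (n : ℕ) {j k : ℕ} (hjk : j ≤ k) (hk : k ≤ 2 ^ n) :
    dist (dyadicPoint mid x y n j) (dyadicPoint mid x y n k) ≤ (k - j) * (dist x y / 2 ^ n) := by
  refine (dist_le_Ico_sum_dist (dyadicPoint mid x y n) hjk).trans_eq ?_
  rw [Finset.sum_congr rfl fun i hi => dist_dyadicPoint_succ hmid n i (by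
    have := (Finset.mem_Ico.1 hi).2; omega)]
  simp [Nat.cast_sub hjk]

theorem dist_dyadicPoint
    (hmid : ∀ a b, dist a (mid a b) = dist a b / 2 ∧ dist (mid a b) b = dist a b / 2)
    (n : ℕ) {j k : ℕ} (hjk : j ≤ k) (hk : k ≤ 2 ^ n) :
    dist (dyadicPoint mid x y n j) (dyadicPoint mid x y n k) = (k - j) * (dist x y / 2 ^ n) := by
  refine le_antisymm (dist_dyadicPoint_le hmid n hjk hk) ?_
  have h₁ := dist_dyadicPoint_le (x := x) (y := y) hmid n (Nat.zero_le j) (hjk.trans hk)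
  have h₂ := dist_dyadicPoint_le (x := x) (y := y) hmid n hk le_rfl
  rw [dyadicPoint_apply_zero] at h₁
  rw [dyadicPoint_apply_two_pow] at h₂
  have hxy : dist x y = 2 ^ n * (dist x y / 2 ^ n) := by field_simp
  push_cast at h₁ h₂
  nlinarith [dist_triangle4 x (dyadicPoint mid x y n j) (dyadicPoint mid x y n k) y]

theorem dist_dyadicPoint_floor_succ_le
    (hmid : ∀ a b, dist a (mid a b) = dist a b / 2 ∧ dist (mid a b) b = dist a b / 2)
    {t : ℝ} (ht₀ : 0 ≤ t) (ht₁ : t ≤ 1) (n : ℕ) :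
    dist (dyadicPoint mid x y n ⌊t * 2 ^ n⌋₊)
      (dyadicPoint mid x y (n + 1) ⌊t * 2 ^ (n + 1)⌋₊) ≤ dist x y / 2 / 2 ^ n := by
  have hpow : t * 2 ^ (n + 1) = 2 * (t * 2 ^ n) := by ring
  have h₁ := Nat.two_mul_floor_le_floor_two_mul (by positivity : 0 ≤ t * 2 ^ n)
  have h₂ := Nat.floor_two_mul_le_two_mul_floor_add_one (by positivity : 0 ≤ t * 2 ^ n)
  rw [← hpow] at h₁ h₂
  calc _ = dist (dyadicPoint mid x y (n + 1) (2 * ⌊t * 2 ^ n⌋₊))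
        (dyadicPoint mid x y (n + 1) ⌊t * 2 ^ (n + 1)⌋₊) := by rw [dyadicPoint_succ_two_mul]
    _ ≤ (⌊t * 2 ^ (n + 1)⌋₊ - 2 * ⌊t * 2 ^ n⌋₊ : ℝ) * (dist x y / 2 ^ (n + 1)) := by
        exact_mod_cast dist_dyadicPoint_le hmid (n + 1) h₁ (Nat.floor_mul_two_pow_le ht₁ (n + 1))
    _ ≤ 1 * (dist x y / 2 ^ (n + 1)) := by
        gcongr
        linarith [show (⌊t * 2 ^ (n + 1)⌋₊ : ℝ) ≤ 2 * ⌊t * 2 ^ n⌋₊ + 1 by exact_mod_cast h₂]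
    _ = dist x y / 2 / 2 ^ n := by rw [pow_succ]; ring

end Dyadic

theorem exists_dist_eq_of_midpoints {F : Type*} [MetricSpace F] [CompleteSpace F]
    (hmid : ∀ a b : F, ∃ m, dist a m = dist a b / 2 ∧ dist m b = dist a b / 2) (x y : F) :
    ∃ γ : ℝ → F, γ 0 = x ∧ γ 1 = y ∧
      ∀ t s, 0 ≤ t → t ≤ s → s ≤ 1 → dist (γ t) (γ s) = (s - t) * dist x y := by
  choose mid hmid using hmid
  have : Nonempty F := ⟨x⟩
  set p : ℝ → ℕ → F := fun t n => dyadicPoint mid x y n ⌊t * 2 ^ n⌋₊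
  have hconv : ∀ t, 0 ≤ t → t ≤ 1 → Tendsto (p t) atTop (𝓝 (limUnder atTop (p t))) :=
    fun t ht₀ ht₁ => (cauchySeq_of_le_geometric_two
      (dist_dyadicPoint_floor_succ_le hmid ht₀ ht₁)).tendsto_limUnder
  have hfloor : ∀ t, 0 ≤ t → Tendsto (fun n => (⌊t * 2 ^ n⌋₊ : ℝ) / 2 ^ n) atTop (𝓝 t) :=
    fun t ht => (tendsto_nat_floor_mul_div_atTop ht).comp
      (tendsto_pow_atTop_atTop_of_one_lt one_lt_two)
  refine ⟨fun t => limUnder atTop (p t), ?_, ?_, fun t s ht hts hs => ?_⟩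
  · refine tendsto_nhds_unique (hconv 0 le_rfl zero_le_one) ?_
    simp [p, dyadicPoint_apply_zero]
  · refine tendsto_nhds_unique (hconv 1 zero_le_one le_rfl) ?_
    have h2 : ∀ n : ℕ, ⌊(2 : ℝ) ^ n⌋₊ = 2 ^ n := fun n => by
      exact_mod_cast Nat.floor_natCast (2 ^ n)
    simp [p, h2, dyadicPoint_apply_two_pow]
  · have hdist : ∀ n, dist (p t n) (p s n) =
        ((⌊s * 2 ^ n⌋₊ : ℝ) / 2 ^ n - ⌊t * 2 ^ n⌋₊ / 2 ^ n) * dist x y := fun n => by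
      rw [dist_dyadicPoint hmid n (Nat.floor_le_floor (by gcongr)) (Nat.floor_mul_two_pow_le hs n)]
      ring
    refine tendsto_nhds_unique (((hconv t ht (hts.trans hs)).dist
      (hconv s (ht.trans hts) hs)).congr hdist) ?_
    exact ((hfloor s (ht.trans hts)).sub (hfloor t ht)).mul_const _

theorem HasApproxIntermediatePoints.isGeodesicDist {F : Type*} [MetricSpace F]
    [LocallyCompactSpace F] [CompleteSpace F]
    (h : HasApproxIntermediatePoints (dist : F → F → ℝ)) : IsGeodesicDist (dist : F → F → ℝ) :=
  have := h.properSpace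
  isGeodesicDist_of_exists_dist_eq dist_comm (fun _ _ => dist_nonneg)
    (exists_dist_eq_of_midpoints h.exists_midpoint)

section Bilipschitz

variable {F : Type*} [MetricSpace F] {e : F → F → ℝ} {α : ℝ}

/-- The metric `e`, carrying the uniformity of `F`, so that completeness and local compactness of
`F` apply to it verbatim. -/
abbrev MetricSpace.ofBilipschitz (e : F → F → ℝ) (hα : 0 < α) (hsymm : ∀ x y, e x y = e y x)
    (htri : ∀ x y z, e x z ≤ e x y + e y z) (hlo : ∀ x y, dist x y ≤ α * e x y)
    (hup : ∀ x y, e x y ≤ α * dist x y) : MetricSpace F :=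
  -- `U` and `hU` are bound before `m`, which would otherwise be picked up as the instance.
  let U : UniformSpace F := inferInstance
  have hU := @Metric.uniformity_basis_dist F _
  let m : MetricSpace F :=
    { dist := e
      dist_self := fun x => le_antisymm (by simpa using hup x x) (by linarith [htri x x x])
      dist_comm := hsymm
      dist_triangle := htri
      eq_of_dist_eq_zero := fun {x y} hxy => dist_le_zero.1 (by simpa [hxy] using hlo x y) }
  @MetricSpace.replaceUniformity F U m <|
    hU.ext (@Metric.uniformity_basis_dist F m.toPseudoMetricSpace)
      (fun ε hε => ⟨ε / α, div_pos hε hα, fun p hp => (hlo _ _).trans_lt ((lt_div_iff₀' hα).1 hp)⟩)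
      (fun ε hε => ⟨ε / α, div_pos hε hα, fun p hp => (hup _ _).trans_lt ((lt_div_iff₀' hα).1 hp)⟩)

theorem isGeodesicDist_of_bilipschitz [LocallyCompactSpace F] [CompleteSpace F] (hα : 0 < α)
    (hsymm : ∀ x y, e x y = e y x) (htri : ∀ x y z, e x z ≤ e x y + e y z)
    (hlo : ∀ x y, dist x y ≤ α * e x y) (hup : ∀ x y, e x y ≤ α * dist x y)
    {E : Type*} {i : E → F} (hi : DenseRange i)
    (h : HasApproxIntermediatePoints fun a b => e (i a) (i b)) : IsGeodesicDist e :=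
  letI := MetricSpace.ofBilipschitz e hα hsymm htri hlo hup
  HasApproxIntermediatePoints.isGeodesicDist (.of_denseRange hi h)

end Bilipschitz

theorem denseRange_inclusion_subset_closure {X : Type*} [TopologicalSpace X] (s : Set X) :
    DenseRange (inclusion (subset_closure : s ⊆ closure s)) :=
  (denseRange_inclusion_iff subset_closure).2 subset_rfl

namespace IsContExt

variable {X : Type*} [MetricSpace X] {Ω : Set X} {d : Ω → Ω → ℝ} {e : closure Ω → closure Ω → ℝ}

theorem apply_inclusion (he : IsContExt Ω d e) (x y : Ω) :
    e (inclusion subset_closure x) (inclusion subset_closure y) = d x y :=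
  he.2 x y

theorem comm (he : IsContExt Ω d e) (hd : ∀ x y, d x y = d y x) (z w : closure Ω) :
    e z w = e w z :=
  (denseRange_inclusion_subset_closure Ω).induction_on₂ (p := fun z w => e z w = e w z)
    (isClosed_eq he.1 (he.1.comp continuous_swap)) (fun x y => by
      rw [he.apply_inclusion, he.apply_inclusion, hd]) z w

theorem triangle (he : IsContExt Ω d e) (hd : ∀ x y z, d x z ≤ d x y + d y z)
    (z w u : closure Ω) : e z u ≤ e z w + e w u :=
  (denseRange_inclusion_subset_closure Ω).induction_on₃ (p := fun z w u => e z u ≤ e z w + e w u)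
    (isClosed_le (he.1.comp (continuous_fst.prodMk continuous_snd.snd))
      ((he.1.comp (continuous_fst.prodMk continuous_snd.fst)).add (he.1.comp continuous_snd)))
    (fun x y z => by simpa only [he.apply_inclusion] using hd x y z) z w u

theorem le_mul_dist (he : IsContExt Ω d e) {α : ℝ} (hd : ∀ x y : Ω, d x y ≤ α * dist x y)
    (z w : closure Ω) : e z w ≤ α * dist z w :=
  (denseRange_inclusion_subset_closure Ω).induction_on₂ (p := fun z w => e z w ≤ α * dist z w)
    (isClosed_le he.1 (by fun_prop)) (fun x y => by rw [he.apply_inclusion]; exact hd x y) z w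

theorem dist_le_mul (he : IsContExt Ω d e) {α : ℝ} (hd : ∀ x y : Ω, dist x y ≤ α * d x y)
    (z w : closure Ω) : dist z w ≤ α * e z w :=
  (denseRange_inclusion_subset_closure Ω).induction_on₂ (p := fun z w => dist z w ≤ α * e z w)
    (isClosed_le (by fun_prop) (he.1.const_mul α)) (fun x y => by
      rw [he.apply_inclusion]; exact hd x y) z w

end IsContExt

theorem stmt3_general {X : Type*} [MetricSpace X] [LocallyCompactSpace X] [CompleteSpace X]
    (Ω : Set X) (α : ℝ) (hα : 1 < α)
    (d : Ω → Ω → ℝ) (hd : MemD α Ω d)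
    (e : closure Ω → closure Ω → ℝ) (he : IsContExt Ω d e) :
    IsGeodesicDist e := by
  obtain ⟨hdist, hlen, hbnd⟩ := hd
  have hα₀ : 0 < α := zero_lt_one.trans hα
  have : LocallyCompactSpace (closure Ω) := isClosed_closure.locallyCompactSpace
  have : CompleteSpace (closure Ω) := isClosed_closure.completeSpace_coe
  refine isGeodesicDist_of_bilipschitz hα₀ (he.comm hdist.1) (he.triangle hdist.2.1)
    (he.dist_le_mul fun x y => (inv_mul_le_iff₀ hα₀).1 (hbnd x y).1)
    (he.le_mul_dist fun x y => (hbnd x y).2) (denseRange_inclusion_subset_closure Ω) ?_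
  simpa only [he.apply_inclusion] using hlen.hasApproxIntermediatePoints hdist

/-- For `d ∈ 𝒟_α(Ω)`, the continuous extension of `d` to the closure of
`Ω` makes it a geodesic space. -/
theorem stmt3 {X : Type*} [MetricSpace X] [LocallyCompactSpace X] [CompleteSpace X]
    (Ω : Set X) (hΩ : IsOpen Ω) (α : ℝ) (hα : 1 < α)
    (d : Ω → Ω → ℝ) (hd : MemD α Ω d)
    (e : closure Ω → closure Ω → ℝ) (he : IsContExt Ω d e) :
    IsGeodesicDist e :=
  stmt3_general Ω α hα d hd e he
end

section
/- Let (X, D) be a locally compact, complete metric space, let α > 1, and let Ω ⊆ X be an open set. Let (d_n)_{n∈ℕ} be distances on Ω with α⁻¹·D ≤ d_n ≤ α·D on Ω × Ω for every n, and suppose d_n → d uniformly on compact subsets of Ω × Ω for some distance d on Ω. Assume moreover that D_α(Ω) ≠ ∅. Then the continuous extensions satisfy d̄_n → d̄ uniformly on compact subsets of Ω̄ × Ω̄. -/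
open Filter MeasureTheory Set
open scoped ENNReal Topology

/-!
The extensions `d̄ₙ` are uniformly Lipschitz on `Ω̄ × Ω̄` (with constant `2α`), since the bound
`|dₙ x y - dₙ x' y'| ≤ dₙ x x' + dₙ y y' ≤ α (D x x' + D y y')` passes from the dense set
`Ω × Ω` to its closure. An equicontinuous sequence converging pointwise on a dense set to a
continuous limit converges pointwise everywhere, hence uniformly on compact sets (Ascoli).
-/

theorem Equicontinuous.tendstoUniformlyOn_of_denseRange {ι κ X α : Type*} [TopologicalSpace X]
    [UniformSpace α] {F : ι → X → α} {f : X → α} {l : Filter ι} {g : κ → X}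
    (hF : Equicontinuous F) (hf : Continuous f) (hg : DenseRange g)
    (hconv : ∀ k, Tendsto (fun i => F i (g k)) l (𝓝 (f (g k)))) {K : Set X} (hK : IsCompact K) :
    TendstoUniformlyOn F f l K := by
  have hpointwise : ∀ x, Tendsto (F · x) l (𝓝 (f x)) := fun x =>
    hg.induction_on x (hF.isClosed_setOfPred_tendsto hf) hconv
  have huniform := (EquicontinuousOn.tendsto_uniformOnFun_iff_pi' (𝔖 := {K})
    (by simpa using hK) (fun _ _ => hF.equicontinuousOn _) l f).2
    (tendsto_pi_nhds.2 fun x => hpointwise x)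
  exact UniformOnFun.tendsto_iff_tendstoUniformlyOn.1 huniform K rfl

theorem denseRange_prodMap_inclusion_closure {X : Type*} [TopologicalSpace X] (s : Set X) :
    DenseRange (Prod.map (inclusion (subset_closure (s := s)))
      (inclusion (subset_closure (s := s)))) :=
  let h := (denseRange_inclusion_iff subset_closure).2 subset_rfl
  h.prodMap h

theorem IsDistance.abs_sub_le {E : Type*} {d : E → E → ℝ} (hd : IsDistance d) (x y x' y' : E) :
    |d x y - d x' y'| ≤ d x x' + d y y' := by
  obtain ⟨hsymm, htri, -⟩ := hd
  rw [abs_sub_le_iff]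
  constructor
  · linarith [htri x x' y, htri x' y' y, hsymm y' y]
  · linarith [htri x' x y', htri x y y', hsymm x' x, hsymm y y']

theorem IsContExt.dist_le {X : Type*} [MetricSpace X] {Ω : Set X} {d : Ω → Ω → ℝ}
    {e : closure Ω → closure Ω → ℝ} {α : ℝ} (he : IsContExt Ω d e) (hd : IsDistance d)
    (hα : 0 ≤ α) (hbd : ∀ x y : Ω, d x y ≤ α * dist x y) (p q : closure Ω × closure Ω) :
    dist (e p.1 p.2) (e q.1 q.2) ≤ 2 * α * dist p q := by
  induction p, q using (denseRange_prodMap_inclusion_closure Ω).induction_on₂ with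
  | hp =>
    exact isClosed_le ((he.1.comp continuous_fst).dist (he.1.comp continuous_snd))
      (continuous_const.mul continuous_dist)
  | h x y =>
    calc _ = dist (d x.1 x.2) (d y.1 y.2) := congrArg₂ dist (he.2 _ _) (he.2 _ _)
      _ ≤ d x.1 y.1 + d x.2 y.2 := hd.abs_sub_le _ _ _ _
      _ ≤ α * dist x.1 y.1 + α * dist x.2 y.2 := add_le_add (hbd _ _) (hbd _ _)
      _ ≤ α * dist x y + α * dist x y := by
        rw [Prod.dist_eq]; gcongr; exacts [le_max_left _ _, le_max_right _ _]
      _ = 2 * α * dist x y := by ring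

theorem tendstoUnifCompactly_iff {E : Type*} [TopologicalSpace E] {dn : ℕ → E → E → ℝ}
    {d : E → E → ℝ} :
    TendstoUnifCompactly dn d ↔ ∀ K : Set (E × E), IsCompact K →
      TendstoUniformlyOn (fun n (p : E × E) => dn n p.1 p.2) (fun p => d p.1 p.2) atTop K := by
  simp only [TendstoUnifCompactly, Metric.tendstoUniformlyOn_iff, eventually_atTop, Real.dist_eq,
    abs_sub_comm (d _ _)]

theorem stmt4_general {X : Type*} [MetricSpace X]
    (Ω : Set X) (α : ℝ) (hα : 1 < α)
    (dn : ℕ → Ω → Ω → ℝ) (hdn : ∀ n, IsDistance (dn n))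
    (hbd : ∀ n, ∀ x y : Ω,
      α⁻¹ * dist (x : X) (y : X) ≤ dn n x y ∧ dn n x y ≤ α * dist (x : X) (y : X))
    (d : Ω → Ω → ℝ)
    (hconv : TendstoUnifCompactly dn d)
    (en : ℕ → closure Ω → closure Ω → ℝ) (hen : ∀ n, IsContExt Ω (dn n) (en n))
    (e : closure Ω → closure Ω → ℝ) (he : IsContExt Ω d e) :
    TendstoUnifCompactly en e := by
  rw [tendstoUnifCompactly_iff] at hconv ⊢
  intro K hK
  have hequi : Equicontinuous fun n (p : closure Ω × closure Ω) => en n p.1 p.2 :=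
    Metric.equicontinuous_of_continuity_modulus (fun t => 2 * α * t)
      (by simpa using (continuous_const_mul (2 * α)).tendsto 0) _
      fun p q n => (hen n).dist_le (hdn n) (by linarith) (fun x y => (hbd n x y).2) p q
  refine hequi.tendstoUniformlyOn_of_denseRange he.1
    (denseRange_prodMap_inclusion_closure Ω) (fun x => ?_) hK
  simpa only [Prod.map_fst, Prod.map_snd, (hen _).2, he.2] using
    (hconv {x} isCompact_singleton).tendsto_at rfl

/-- If `dn → d` uniformly on compact subsets of `Ω × Ω`, then the
continuous extensions converge uniformly on compact subsets of `Ω̄ × Ω̄`. -/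
theorem stmt4 {X : Type*} [MetricSpace X] [LocallyCompactSpace X] [CompleteSpace X]
    (Ω : Set X) (hΩ : IsOpen Ω) (α : ℝ) (hα : 1 < α)
    (hne : ∃ d₀ : Ω → Ω → ℝ, MemD α Ω d₀)
    (dn : ℕ → Ω → Ω → ℝ) (hdn : ∀ n, IsDistance (dn n))
    (hbd : ∀ n, ∀ x y : Ω,
      α⁻¹ * dist (x : X) (y : X) ≤ dn n x y ∧ dn n x y ≤ α * dist (x : X) (y : X))
    (d : Ω → Ω → ℝ) (hd : IsDistance d)
    (hconv : TendstoUnifCompactly dn d)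
    (en : ℕ → closure Ω → closure Ω → ℝ) (hen : ∀ n, IsContExt Ω (dn n) (en n))
    (e : closure Ω → closure Ω → ℝ) (he : IsContExt Ω d e) :
    TendstoUnifCompactly en e :=
  stmt4_general Ω α hα dn hdn hbd d hconv en hen e he
end

section
/- Let (X, D) be a locally compact, complete metric space, α > 1, and Ω ⊆ X an open set with D_α(Ω) ≠ ∅. Let (d_n)_{n∈ℕ} ⊆ D_α(Ω) and d ∈ D_α(Ω). If d_n → d uniformly on compact subsets of Ω × Ω, then the functionals J_{d_n} Γ-converge to J_d on B(Ω): (liminf) for every sequence (μ_n) ⊆ B(Ω) converging weakly* to μ ∈ B(Ω) one has J_d(μ) ≤ liminf_n J_{d_n}(μ_n); (limsup) for every μ ∈ B(Ω) there exists a sequence (μ_n) ⊆ B(Ω) converging weakly* to μ with limsup_n J_{d_n}(μ_n) ≤ J_d(μ). -/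
open Filter MeasureTheory Set
open scoped ENNReal Topology

/-- Weak* convergence of finite Borel measures, tested against `C₀` functions. -/
def WeakStarConv {Y : Type*} [TopologicalSpace Y] [MeasurableSpace Y]
    (μn : ℕ → Measure Y) (μ : Measure Y) : Prop :=
  ∀ f : ZeroAtInftyContinuousMap Y ℝ,
    Tendsto (fun n => ∫ y, f y ∂ μn n) atTop (𝓝 (∫ y, f y ∂ μ))

/-- The functional `J_d(μ) = ∫ d(x,y) dμ(x,y)`. -/
noncomputable def Jfun {X : Type*} [MetricSpace X] {Ω : Set X} [MeasurableSpace X]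
    (d : Ω → Ω → ℝ) (μ : Measure (Ω × Ω)) : ℝ≥0∞ :=
  ∫⁻ p, ENNReal.ofReal (d p.1 p.2) ∂ μ

/-!
Liminf: for a compactly supported continuous `f ≤ d` and `ε > 0`, uniform convergence on the
support of `f` gives `(f - ε)⁺ ≤ dₙ` for large `n`, so testing weak* convergence against
`(f - ε)⁺` bounds `∫ (f - ε)⁺ dμ` by `liminf J_{dₙ}(μₙ)`. Letting `ε → 0` and exhausting
`Ω × Ω` by compact sets gives `J_d(μ) ≤ liminf J_{dₙ}(μₙ)`. Such an exhaustion exists because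
`Ω`, being a length space, is path connected, and a connected locally compact metric space is
σ-compact: iterating `K ↦ ⋃_{x ∈ K} B̄(x, ρ(x)/2)` from a point, where `ρ(x) ≤ 1` is the largest
radius of a compact ball around `x`, stays compact and, as `ρ` is 1-Lipschitz, fills a clopen set.

Limsup: the constant sequence `μₙ = μ` is a recovery sequence, by dominated convergence with
`dₙ ≤ α² d`.
-/

section CompactRadius

open Metric

variable {E : Type*} [PseudoMetricSpace E]

noncomputable def compactRadius (x : E) : ℝ :=
  sSup {r : ℝ | r ≤ 1 ∧ IsCompact (closedBall x r)}

lemma compactRadius_le_one (x : E) : compactRadius x ≤ 1 :=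
  csSup_le ⟨-1, by norm_num, by simp⟩ fun _ hr => hr.1

lemma le_compactRadius {x : E} {r : ℝ} (hr1 : r ≤ 1) (hr : IsCompact (closedBall x r)) :
    r ≤ compactRadius x :=
  le_csSup ⟨1, fun _ hs => hs.1⟩ ⟨hr1, hr⟩

lemma compactRadius_pos [WeaklyLocallyCompactSpace E] (x : E) : 0 < compactRadius x := by
  obtain ⟨r, hr, hrc⟩ := exists_isCompact_closedBall x
  refine (lt_min hr one_pos).trans_le (le_compactRadius (min_le_right _ _) ?_)
  exact hrc.of_isClosed_subset isClosed_closedBall (closedBall_subset_closedBall (min_le_left _ _))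

lemma isCompact_closedBall_of_lt_compactRadius {x : E} {r : ℝ} (hr : r < compactRadius x) :
    IsCompact (closedBall x r) := by
  obtain ⟨s, ⟨-, hs⟩, hrs⟩ := exists_lt_of_lt_csSup
    (s := {r : ℝ | r ≤ 1 ∧ IsCompact (closedBall x r)}) ⟨-1, by norm_num, by simp⟩ hr
  exact hs.of_isClosed_subset isClosed_closedBall (closedBall_subset_closedBall hrs.le)

lemma compactRadius_sub_dist_le (x y : E) : compactRadius x - dist x y ≤ compactRadius y := by
  refine le_of_forall_lt_imp_le_of_dense fun r hr => le_compactRadius ?_ ?_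
  · linarith [compactRadius_le_one x, dist_nonneg (x := x) (y := y)]
  · have hcomp := isCompact_closedBall_of_lt_compactRadius (r := r + dist x y) (by linarith)
    refine hcomp.of_isClosed_subset isClosed_closedBall fun z hz => ?_
    rw [mem_closedBall] at hz ⊢
    linarith [dist_triangle z y x, dist_comm x y]

noncomputable def compactGrowth (K : Set E) : Set E :=
  closure (⋃ x ∈ K, closedBall x (compactRadius x / 2))

lemma closedBall_subset_compactGrowth {K : Set E} {x : E} (hx : x ∈ K) :
    closedBall x (compactRadius x / 2) ⊆ compactGrowth K :=
  (subset_biUnion_of_mem (u := fun x => closedBall x (compactRadius x / 2)) hx).trans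
    subset_closure

lemma IsCompact.compactGrowth [WeaklyLocallyCompactSpace E] {K : Set E} (hK : IsCompact K) :
    IsCompact (compactGrowth K) := by
  have hρ := compactRadius_pos (E := E)
  obtain ⟨t, htK, htfin, hcover⟩ := hK.elim_finite_subcover_image
    (fun x _ => isOpen_ball (ε := compactRadius x / 8))
    fun x hx => mem_biUnion hx (mem_ball_self (by linarith [hρ x]))
  have hcomp : IsCompact (⋃ x ∈ t, closedBall x (3 / 4 * compactRadius x)) :=
    htfin.isCompact_biUnion fun x _ =>
      isCompact_closedBall_of_lt_compactRadius (by linarith [hρ x])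
  refine hcomp.closure_of_subset ?_
  -- for `y ∈ ball x (ρ x / 8)` we have `ρ y ≤ 9 ρ x / 8`, so `closedBall y (ρ y / 2)` lies in
  -- `closedBall x (3 ρ x / 4)`
  intro z hz
  obtain ⟨y, hy, hzy⟩ := mem_iUnion₂.1 hz
  obtain ⟨x, hxt, hyx⟩ := mem_iUnion₂.1 (hcover hy)
  rw [mem_ball] at hyx
  rw [mem_closedBall] at hzy
  refine mem_iUnion₂.2 ⟨x, hxt, mem_closedBall.2 ?_⟩
  linarith [compactRadius_sub_dist_le y x, dist_triangle z y x, hρ x]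

theorem sigmaCompactSpace_of_connectedSpace [WeaklyLocallyCompactSpace E] [ConnectedSpace E] :
    SigmaCompactSpace E := by
  obtain ⟨x₀⟩ := ‹ConnectedSpace E›.toNonempty
  set K : ℕ → Set E := fun n => compactGrowth^[n] {x₀}
  have hK : ∀ n, IsCompact (K n) := by
    intro n
    induction n with
    | zero => exact isCompact_singleton
    | succ n ih => simpa only [K, Function.iterate_succ_apply'] using ih.compactGrowth
  have hstep : ∀ n, ∀ y ∈ K n, ∀ x, dist x y ≤ compactRadius y / 2 → x ∈ K (n + 1) :=
    fun n y hy x hxy => by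
      simpa only [K, Function.iterate_succ_apply'] using
        closedBall_subset_compactGrowth hy (mem_closedBall.2 hxy)
  have hopen : IsOpen (⋃ n, K n) := by
    refine isOpen_iff.2 fun y hy => ?_
    obtain ⟨n, hyn⟩ := mem_iUnion.1 hy
    exact ⟨compactRadius y / 2, by linarith [compactRadius_pos y], fun x hx =>
      mem_iUnion.2 ⟨n + 1, hstep n y hyn x (mem_ball.1 hx).le⟩⟩
  have hclosed : IsClosed (⋃ n, K n) := by
    refine closure_subset_iff_isClosed.1 fun x hx => ?_
    have hρ := compactRadius_pos x
    obtain ⟨y, hy, hxy⟩ := mem_closure_iff.1 hx (compactRadius x / 4) (by linarith)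
    obtain ⟨n, hyn⟩ := mem_iUnion.1 hy
    refine mem_iUnion.2 ⟨n + 1, hstep n y hyn x ?_⟩
    linarith [compactRadius_sub_dist_le x y]
  exact SigmaCompactSpace_iff_exists_compact_covering.2
    ⟨K, hK, IsClopen.eq_univ ⟨hclosed, hopen⟩ ⟨x₀, mem_iUnion.2 ⟨0, rfl⟩⟩⟩

end CompactRadius

open scoped NNReal CompactlySupported

lemma IsDistance.lipschitzWith {E : Type*} [PseudoMetricSpace E] {d : E → E → ℝ}
    (hd : IsDistance d) {C : ℝ≥0} (hC : ∀ x y, d x y ≤ C * dist x y) :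
    LipschitzWith (2 * C) fun p : E × E => d p.1 p.2 := by
  obtain ⟨hsymm, htri, -⟩ := hd
  refine LipschitzWith.of_dist_le_mul fun p q => ?_
  have h₁ : dist p.1 q.1 ≤ dist p q := le_max_left _ _
  have h₂ : dist p.2 q.2 ≤ dist p q := le_max_right _ _
  have key : |d p.1 p.2 - d q.1 q.2| ≤ d p.1 q.1 + d p.2 q.2 := abs_sub_le_iff.2
    ⟨by linarith [htri p.1 q.1 p.2, htri q.1 q.2 p.2, hsymm q.2 p.2],
      by linarith [htri q.1 p.1 q.2, htri p.1 p.2 q.2, hsymm p.1 q.1]⟩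
  calc dist (d p.1 p.2) (d q.1 q.2) ≤ d p.1 q.1 + d p.2 q.2 := (Real.dist_eq _ _).trans_le key
    _ ≤ C * dist p q + C * dist p q :=
      add_le_add ((hC _ _).trans (mul_le_mul_of_nonneg_left h₁ C.2))
        ((hC _ _).trans (mul_le_mul_of_nonneg_left h₂ C.2))
    _ = ↑(2 * C) * dist p q := by push_cast; ring

lemma IsLengthDist.exists_lipCurve {E : Type*} {d : E → E → ℝ} (h : IsLengthDist d)
    (x y : E) : ∃ γ, LipCurve d γ ∧ γ 0 = x ∧ γ 1 = y := by
  by_contra! hcon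
  refine ENNReal.ofReal_ne_top ((h x y).trans ?_)
  simp only [iInf_eq_top]
  exact fun γ hγ h₀ h₁ => absurd h₁ (hcon γ hγ h₀)

lemma LipCurve.continuous_restrict_unitInterval {E : Type*} [PseudoMetricSpace E]
    {d : E → E → ℝ} {C : ℝ} (hC : 0 ≤ C) (hd : ∀ x y, dist x y ≤ C * d x y) {γ : ℝ → E}
    (hγ : LipCurve d γ) : Continuous fun t : unitInterval => γ t := by
  obtain ⟨K, hK⟩ := hγ
  refine (LipschitzWith.of_dist_le' (K := C * K) fun s t => ?_).continuous
  calc dist (γ s) (γ t) ≤ C * d (γ s) (γ t) := hd _ _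
    _ ≤ C * (K * |(s : ℝ) - t|) := mul_le_mul_of_nonneg_left (hK s s.2 t t.2) hC
    _ = C * K * dist s t := by rw [Subtype.dist_eq, Real.dist_eq, mul_assoc]

lemma TendstoUnifCompactly.tendstoUniformlyOn {E : Type*} [TopologicalSpace E]
    {dn : ℕ → E → E → ℝ} {d : E → E → ℝ} (h : TendstoUnifCompactly dn d)
    {K : Set (E × E)} (hK : IsCompact K) :
    TendstoUniformlyOn (fun n (p : E × E) => dn n p.1 p.2) (fun p => d p.1 p.2) atTop K := by
  refine Metric.tendstoUniformlyOn_iff.2 fun ε hε => ?_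
  obtain ⟨N, hN⟩ := h K hK ε hε
  filter_upwards [eventually_ge_atTop N] with n hn p hp
  rw [dist_comm, Real.dist_eq]
  exact hN n hn p hp

namespace MemD

variable {X : Type*} [MetricSpace X] {Ω : Set X} {α : ℝ} {d : Ω → Ω → ℝ}

lemma dist_le_mul (hα : 0 < α) (h : MemD α Ω d) (x y : Ω) : dist x y ≤ α * d x y := by
  have := mul_le_mul_of_nonneg_left (h.2.2 x y).1 hα.le
  rwa [← mul_assoc, mul_inv_cancel₀ hα.ne', one_mul] at this

lemma nonneg (hα : 0 < α) (h : MemD α Ω d) (x y : Ω) : 0 ≤ d x y :=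
  nonneg_of_mul_nonneg_right (dist_nonneg.trans (h.dist_le_mul hα x y)) hα

lemma le_sq_mul (hα : 0 < α) (h : MemD α Ω d) {d' : Ω → Ω → ℝ} (h' : MemD α Ω d')
    (x y : Ω) : d' x y ≤ α ^ 2 * d x y :=
  calc d' x y ≤ α * dist x y := (h'.2.2 x y).2
    _ ≤ α * (α * d x y) := mul_le_mul_of_nonneg_left (h.dist_le_mul hα x y) hα.le
    _ = α ^ 2 * d x y := by ring

protected lemma continuous (hα : 0 < α) (h : MemD α Ω d) :
    Continuous fun p : Ω × Ω => d p.1 p.2 :=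
  (h.1.lipschitzWith (C := ⟨α, hα.le⟩) fun x y => (h.2.2 x y).2).continuous

lemma joined (hα : 0 < α) (h : MemD α Ω d) (x y : Ω) : Joined x y := by
  obtain ⟨γ, hγ, h₀, h₁⟩ := h.2.1.exists_lipCurve x y
  exact ⟨⟨⟨fun t => γ t, hγ.continuous_restrict_unitInterval hα.le (h.dist_le_mul hα)⟩,
    h₀, h₁⟩⟩

lemma sigmaCompactSpace [WeaklyLocallyCompactSpace Ω] (hα : 0 < α) (h : MemD α Ω d) :
    SigmaCompactSpace Ω := by
  rcases isEmpty_or_nonempty Ω with _ | _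
  · infer_instance
  · have : PathConnectedSpace Ω := ⟨‹_›, h.joined hα⟩
    exact sigmaCompactSpace_of_connectedSpace

end MemD

lemma lintegral_ofReal_le_of_forall_sub_le {E : Type*} [MeasurableSpace E] {μ : Measure E}
    [IsFiniteMeasure μ] {f : E → ℝ} {L : ℝ≥0∞}
    (h : ∀ ε > 0, ∫⁻ x, ENNReal.ofReal (f x - ε) ∂μ ≤ L) :
    ∫⁻ x, ENNReal.ofReal (f x) ∂μ ≤ L := by
  have hsplit : ∀ ε > 0, ∫⁻ x, ENNReal.ofReal (f x) ∂μ ≤ L + ENNReal.ofReal ε * μ univ :=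
    fun ε hε => calc
      ∫⁻ x, ENNReal.ofReal (f x) ∂μ ≤ ∫⁻ x, (ENNReal.ofReal (f x - ε) + ENNReal.ofReal ε) ∂μ :=
        lintegral_mono fun x => by simpa using ENNReal.ofReal_add_le (p := f x - ε) (q := ε)
      _ = ∫⁻ x, ENNReal.ofReal (f x - ε) ∂μ + ENNReal.ofReal ε * μ univ := by
        rw [lintegral_add_right _ measurable_const, lintegral_const]
      _ ≤ L + ENNReal.ofReal ε * μ univ := by gcongr; exact h ε hε
  have hlim : Tendsto (fun ε : ℝ => L + ENNReal.ofReal ε * μ univ) (𝓝[>] 0) (𝓝 L) := by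
    have h₀ : Tendsto ENNReal.ofReal (𝓝[>] 0) (𝓝 0) :=
      (ENNReal.continuous_ofReal.tendsto' 0 0 ENNReal.ofReal_zero).mono_left nhdsWithin_le_nhds
    simpa using
      tendsto_const_nhds.add (ENNReal.Tendsto.mul_const h₀ (Or.inr (measure_ne_top μ univ)))
  exact ge_of_tendsto hlim (eventually_nhdsWithin_of_forall hsplit)

section WeakStar

variable {E : Type*} [TopologicalSpace E] [MeasurableSpace E] [OpensMeasurableSpace E]
  {μn : ℕ → Measure E} {μ : Measure E}

lemma WeakStarConv.tendsto_lintegral_ofReal [∀ n, IsFiniteMeasureOnCompacts (μn n)]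
    [IsFiniteMeasureOnCompacts μ] (h : WeakStarConv μn μ) (g : C_c(E, ℝ)) (hg : ∀ x, 0 ≤ g x) :
    Tendsto (fun n => ∫⁻ x, ENNReal.ofReal (g x) ∂μn n) atTop
      (𝓝 (∫⁻ x, ENNReal.ofReal (g x) ∂μ)) := by
  have hint : ∀ (ν : Measure E) [IsFiniteMeasureOnCompacts ν],
      ∫⁻ x, ENNReal.ofReal (g x) ∂ν = ENNReal.ofReal (∫ x, g x ∂ν) := fun ν _ =>
    (ofReal_integral_eq_lintegral_ofReal
      (g.continuous.integrable_of_hasCompactSupport g.hasCompactSupport)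
      (Eventually.of_forall hg)).symm
  simp only [hint]
  exact (ENNReal.continuous_ofReal.tendsto _).comp (h g)

lemma lintegral_ofReal_le_liminf_of_tendstoUniformlyOn [∀ n, IsFiniteMeasureOnCompacts (μn n)]
    [IsFiniteMeasure μ] (h : WeakStarConv μn μ) {D : E → ℝ} {Dn : ℕ → E → ℝ} (f : C_c(E, ℝ))
    (hfD : ∀ x, f x ≤ D x) (hconv : TendstoUniformlyOn Dn D atTop (tsupport f)) :
    ∫⁻ x, ENNReal.ofReal (f x) ∂μ ≤
      liminf (fun n => ∫⁻ x, ENNReal.ofReal (Dn n x) ∂μn n) atTop := by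
  refine lintegral_ofReal_le_of_forall_sub_le fun ε hε => ?_
  -- `(f - ε)⁺` is again compactly supported, so weak* convergence applies to it
  let g : C_c(E, ℝ) := ⟨⟨fun x => max (f x - ε) 0, by fun_prop⟩,
    f.hasCompactSupport.mono fun x hx hfx => hx (by simp [hfx, hε.le])⟩
  have hg : ∀ x, ENNReal.ofReal (g x) = ENNReal.ofReal (f x - ε) := fun x => by
    simp [g, ENNReal.ofReal_max]
  have hlim := h.tendsto_lintegral_ofReal g fun x => le_max_right _ _
  simp only [hg] at hlim
  have hle : ∀ᶠ n in atTop, ∫⁻ x, ENNReal.ofReal (f x - ε) ∂μn n ≤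
      ∫⁻ x, ENNReal.ofReal (Dn n x) ∂μn n := by
    filter_upwards [Metric.tendstoUniformlyOn_iff.1 hconv ε hε] with n hn
    refine lintegral_mono fun x => ENNReal.ofReal_le_ofReal_iff'.2 ?_
    by_cases hx : x ∈ tsupport f
    · have := hn x hx
      rw [Real.dist_eq, abs_lt] at this
      exact Or.inl (by linarith [hfD x])
    · exact Or.inr (by simp [image_eq_zero_of_notMem_tsupport hx, hε.le])
  exact hlim.liminf_eq ▸ liminf_le_liminf hle

lemma lintegral_ofReal_le_of_forall_compactlySupported_le [T2Space E] [LocallyCompactSpace E]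
    [SigmaCompactSpace E] {D : E → ℝ} (hD : Continuous D) (hD₀ : ∀ x, 0 ≤ D x) {L : ℝ≥0∞}
    (h : ∀ f : C_c(E, ℝ), (∀ x, f x ≤ D x) → ∫⁻ x, ENNReal.ofReal (f x) ∂μ ≤ L) :
    ∫⁻ x, ENNReal.ofReal (D x) ∂μ ≤ L := by
  rw [← setLIntegral_univ, ← iUnion_compactCovering E,
    setLIntegral_iUnion_of_directed _ (Monotone.directed_le (compactCovering_subset E))]
  refine iSup_le fun m => ?_
  obtain ⟨φ, hφ₁, -, hφc, hφ⟩ := exists_continuous_one_zero_of_isCompact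
    (isCompact_compactCovering E m) isClosed_empty (disjoint_empty _)
  let f : C_c(E, ℝ) := ⟨⟨fun x => D x * φ x, hD.mul φ.continuous⟩, hφc.mul_left⟩
  calc ∫⁻ x in compactCovering E m, ENNReal.ofReal (D x) ∂μ
      ≤ ∫⁻ x in compactCovering E m, ENNReal.ofReal (f x) ∂μ :=
        setLIntegral_mono' (isCompact_compactCovering E m).measurableSet fun x hx => by
          simp [f, hφ₁ hx]
    _ ≤ ∫⁻ x, ENNReal.ofReal (f x) ∂μ := setLIntegral_le_lintegral _ _
    _ ≤ L := h f fun x => mul_le_of_le_one_right (hD₀ x) (hφ x).2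

theorem lintegral_ofReal_le_liminf_of_weakStarConv [T2Space E] [LocallyCompactSpace E]
    [SigmaCompactSpace E] [∀ n, IsFiniteMeasureOnCompacts (μn n)] [IsFiniteMeasure μ]
    (h : WeakStarConv μn μ) {D : E → ℝ} (hD : Continuous D) (hD₀ : ∀ x, 0 ≤ D x)
    {Dn : ℕ → E → ℝ} (hconv : ∀ K, IsCompact K → TendstoUniformlyOn Dn D atTop K) :
    ∫⁻ x, ENNReal.ofReal (D x) ∂μ ≤
      liminf (fun n => ∫⁻ x, ENNReal.ofReal (Dn n x) ∂μn n) atTop :=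
  lintegral_ofReal_le_of_forall_compactlySupported_le hD hD₀ fun f hf =>
    lintegral_ofReal_le_liminf_of_tendstoUniformlyOn h f hf (hconv _ f.hasCompactSupport)

end WeakStar

theorem limsup_lintegral_ofReal_le_of_le_mul {E : Type*} [MeasurableSpace E] {μ : Measure E}
    {D : E → ℝ} {Dn : ℕ → E → ℝ} {C : ℝ≥0} (hDn : ∀ n, Measurable (Dn n))
    (hle : ∀ n x, Dn n x ≤ C * D x) (hlim : ∀ x, Tendsto (fun n => Dn n x) atTop (𝓝 (D x))) :
    limsup (fun n => ∫⁻ x, ENNReal.ofReal (Dn n x) ∂μ) atTop ≤ ∫⁻ x, ENNReal.ofReal (D x) ∂μ := by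
  rcases eq_or_ne (∫⁻ x, ENNReal.ofReal (D x) ∂μ) ⊤ with hI | hI
  · exact hI ▸ le_top
  refine (tendsto_lintegral_of_dominated_convergence (fun x => C * ENNReal.ofReal (D x))
    (fun n => (hDn n).ennreal_ofReal) (fun n => Eventually.of_forall fun x => ?_) ?_
    (Eventually.of_forall fun x => (ENNReal.continuous_ofReal.tendsto _).comp (hlim x)))
    |>.limsup_eq.le
  · calc ENNReal.ofReal (Dn n x) ≤ ENNReal.ofReal (C * D x) := ENNReal.ofReal_le_ofReal (hle n x)
      _ = C * ENNReal.ofReal (D x) := by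
        rw [ENNReal.ofReal_mul C.coe_nonneg, ENNReal.ofReal_coe_nnreal]
  · rw [lintegral_const_mul' _ _ ENNReal.coe_ne_top]
    exact ENNReal.mul_ne_top ENNReal.coe_ne_top hI

theorem stmt5_general {X : Type*} [MetricSpace X] [MeasurableSpace X] [BorelSpace X]
    [LocallyCompactSpace X]
    (Ω : Set X) (hΩ : IsOpen Ω) (α : ℝ) (hα : 1 < α)
    (dn : ℕ → Ω → Ω → ℝ) (hdn : ∀ n, MemD α Ω (dn n))
    (d : Ω → Ω → ℝ) (hd : MemD α Ω d)
    (hconv : TendstoUnifCompactly dn d) :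
    (∀ (μn : ℕ → Measure (Ω × Ω)) (μ : Measure (Ω × Ω)),
      (∀ n, IsFiniteMeasure (μn n)) → IsFiniteMeasure μ → WeakStarConv μn μ →
      Jfun d μ ≤ liminf (fun n => Jfun (dn n) (μn n)) atTop) ∧
    ∀ μ : Measure (Ω × Ω), IsFiniteMeasure μ →
      ∃ μn : ℕ → Measure (Ω × Ω), (∀ n, IsFiniteMeasure (μn n)) ∧ WeakStarConv μn μ ∧
        limsup (fun n => Jfun (dn n) (μn n)) atTop ≤ Jfun d μ := by
  have hα₀ : 0 < α := one_pos.trans hα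
  have : LocallyCompactSpace Ω := hΩ.locallyCompactSpace
  have : SigmaCompactSpace Ω := hd.sigmaCompactSpace hα₀
  refine ⟨fun μn μ _ _ hw => ?_,
    fun μ hμ => ⟨fun _ => μ, fun _ => hμ, fun _ => tendsto_const_nhds, ?_⟩⟩
  · exact lintegral_ofReal_le_liminf_of_weakStarConv hw (hd.continuous hα₀)
      (fun p => hd.nonneg hα₀ p.1 p.2) fun K hK => hconv.tendstoUniformlyOn hK
  · exact limsup_lintegral_ofReal_le_of_le_mul (C := ⟨α ^ 2, sq_nonneg α⟩)
      (fun n => ((hdn n).continuous hα₀).measurable) (fun n p => hd.le_sq_mul hα₀ (hdn n) p.1 p.2)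
      fun p => (hconv.tendstoUniformlyOn isCompact_singleton).tendsto_at rfl

/-- uniform convergence of the distances on compact sets implies
Γ-convergence of the functionals `J_{dn}` to `J_d` on nonnegative finite Borel
measures with the weak* topology. -/
theorem stmt5 {X : Type*} [MetricSpace X] [MeasurableSpace X] [BorelSpace X]
    [LocallyCompactSpace X] [CompleteSpace X]
    (Ω : Set X) (hΩ : IsOpen Ω) (α : ℝ) (hα : 1 < α)
    (hne : ∃ d₀ : Ω → Ω → ℝ, MemD α Ω d₀)
    (dn : ℕ → Ω → Ω → ℝ) (hdn : ∀ n, MemD α Ω (dn n))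
    (d : Ω → Ω → ℝ) (hd : MemD α Ω d)
    (hconv : TendstoUnifCompactly dn d) :
    (∀ (μn : ℕ → Measure (Ω × Ω)) (μ : Measure (Ω × Ω)),
      (∀ n, IsFiniteMeasure (μn n)) → IsFiniteMeasure μ → WeakStarConv μn μ →
      Jfun d μ ≤ liminf (fun n => Jfun (dn n) (μn n)) atTop) ∧
    ∀ μ : Measure (Ω × Ω), IsFiniteMeasure μ →
      ∃ μn : ℕ → Measure (Ω × Ω), (∀ n, IsFiniteMeasure (μn n)) ∧ WeakStarConv μn μ ∧
        limsup (fun n => Jfun (dn n) (μn n)) atTop ≤ Jfun d μ :=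
  stmt5_general Ω hΩ α hα dn hdn d hd hconv
end
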